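/- arXiv:2001.05713 — 5 statements merged into one kernel-verified Lean document; each statement's English description precedes it below -/
import Mathlib

section
/- For every natural number K ≥ 1 and every real α with 0 < α ≤ 1, the sum ∑_{k=1}^{K} (1/k) · C(K,k) · α^k · (1-α)^{K-k} is at most 2/(K·α). -/
/-!
The identity `(K + 1) * C(K, k) = (k + 1) * C(K + 1, k + 1)` and `(k + 1) / k ≤ 2` give
`C(K, k) / k ≤ 2 C(K + 1, k + 1) / (K + 1)`, so the `k`-th term is at most `2 / ((K + 1) α)` times
the Binomial(K + 1, α) probability of `k + 1`. These probabilities sum to at most `1`.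
-/

open Finset

theorem one_div_mul_choose_le_two_div_mul_succ_choose (K : ℕ) {k : ℕ} (hk : 1 ≤ k) :
    1 / (k : ℝ) * K.choose k ≤ 2 / ((K : ℝ) + 1) * (K + 1).choose (k + 1) := by
  have hk' : (1 : ℝ) ≤ k := by exact_mod_cast hk
  have hchoose : ((K : ℝ) + 1) * K.choose k = (K + 1).choose (k + 1) * ((k : ℝ) + 1) := by
    exact_mod_cast Nat.add_one_mul_choose_eq K k
  rw [div_mul_eq_mul_div, div_mul_eq_mul_div, one_mul, div_le_div_iff₀ (by positivity) (by positivity),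
    mul_comm, hchoose]
  have : (0 : ℝ) ≤ (K + 1).choose (k + 1) := by positivity
  nlinarith

theorem sum_choose_mul_pow_mul_pow_le_one (n : ℕ) {α : ℝ} (hα : 0 ≤ α) (hα1 : α ≤ 1)
    (s : Finset ℕ) : ∑ j ∈ s, (n.choose j : ℝ) * α ^ j * (1 - α) ^ (n - j) ≤ 1 := by
  have hterm_nonneg : ∀ j, 0 ≤ (n.choose j : ℝ) * α ^ j * (1 - α) ^ (n - j) := fun j => by
    have : 0 ≤ 1 - α := by linarith
    positivity
  calc ∑ j ∈ s, (n.choose j : ℝ) * α ^ j * (1 - α) ^ (n - j)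
      ≤ ∑ j ∈ s ∪ range (n + 1), (n.choose j : ℝ) * α ^ j * (1 - α) ^ (n - j) :=
        sum_le_sum_of_subset_of_nonneg subset_union_left fun j _ _ => hterm_nonneg j
    _ = ∑ j ∈ range (n + 1), (n.choose j : ℝ) * α ^ j * (1 - α) ^ (n - j) := by
        refine (sum_subset subset_union_right fun j _ hj => ?_).symm
        rw [Nat.choose_eq_zero_of_lt (by simpa using hj), Nat.cast_zero, zero_mul, zero_mul]
    _ = (α + (1 - α)) ^ n := by
        rw [add_pow]
        exact sum_congr rfl fun j _ => by ring
    _ = 1 := by simp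

theorem one_div_mul_choose_mul_pow_mul_pow_le (K : ℕ) {k : ℕ} (hk : 1 ≤ k) {α : ℝ}
    (hα : 0 < α) (hα1 : α ≤ 1) :
    1 / (k : ℝ) * K.choose k * α ^ k * (1 - α) ^ (K - k) ≤
      2 / (((K : ℝ) + 1) * α) *
        ((K + 1).choose (k + 1) * α ^ (k + 1) * (1 - α) ^ (K + 1 - (k + 1))) := by
  have hweight : 0 ≤ α ^ k * (1 - α) ^ (K - k) := by
    have : 0 ≤ 1 - α := by linarith
    positivity
  calc 1 / (k : ℝ) * K.choose k * α ^ k * (1 - α) ^ (K - k)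
      = 1 / (k : ℝ) * K.choose k * (α ^ k * (1 - α) ^ (K - k)) := by ring
    _ ≤ 2 / ((K : ℝ) + 1) * (K + 1).choose (k + 1) * (α ^ k * (1 - α) ^ (K - k)) :=
        mul_le_mul_of_nonneg_right (one_div_mul_choose_le_two_div_mul_succ_choose K hk) hweight
    _ = _ := by
        rw [Nat.add_sub_add_right]
        field_simp
        ring

theorem binomial_truncated_reciprocal_sum_le (K : ℕ) (hK : 1 ≤ K) (α : ℝ)
    (hα : 0 < α) (hα1 : α ≤ 1) :
    ∑ k ∈ Finset.Icc 1 K,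
        (1 / (k : ℝ)) * (K.choose k : ℝ) * α ^ k * (1 - α) ^ (K - k) ≤ 2 / (K * α) := by
  have hK' : (1 : ℝ) ≤ K := by exact_mod_cast hK
  have hshifted : ∑ k ∈ Icc 1 K,
      ((K + 1).choose (k + 1) : ℝ) * α ^ (k + 1) * (1 - α) ^ (K + 1 - (k + 1)) ≤ 1 := by
    have := sum_choose_mul_pow_mul_pow_le_one (K + 1) hα.le hα1 ((Icc 1 K).map (addRightEmbedding 1))
    rwa [sum_map] at this
  calc ∑ k ∈ Icc 1 K, 1 / (k : ℝ) * K.choose k * α ^ k * (1 - α) ^ (K - k)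
      ≤ ∑ k ∈ Icc 1 K, 2 / (((K : ℝ) + 1) * α) *
          ((K + 1).choose (k + 1) * α ^ (k + 1) * (1 - α) ^ (K + 1 - (k + 1))) :=
        sum_le_sum fun k hk =>
          one_div_mul_choose_mul_pow_mul_pow_le K (mem_Icc.mp hk).1 hα hα1
    _ ≤ 2 / (((K : ℝ) + 1) * α) := by
        rw [← mul_sum]
        exact mul_le_of_le_one_right (by positivity) hshifted
    _ ≤ 2 / (K * α) := by gcongr; linarith
end

section
/- For every natural number K ≥ 1 and every real α with 0 < α ≤ 1, the sum ∑_{k=1}^{K} (1/√k) · C(K,k) · α^k · (1-α)^{K-k} is at most √6/√(K·α). -/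
/-!
Write `p k = C(K,k) α^k (1-α)^(K-k)`. By Cauchy–Schwarz,
`(∑ p k / √k)² ≤ (∑ p k) (∑ p k / k)`, and the first factor is at most `1`.
For `k ≥ 1` we have `1/k ≤ 2/(k+1)`, and the identity `(n+1) C(n,k) = (k+1) C(n+1,k+1)` turns
`∑ p k / (k+1)` into a shifted binomial sum, equal to `(1 - (1-α)^(K+1)) / ((K+1) α) ≤ 1/(K α)`.
Hence the sum is at most `√2 / √(K α)`.
-/

open Finset

theorem sum_range_choose_mul_pow_mul_one_sub_pow {R : Type*} [CommRing R] (α : R) (n : ℕ) :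
    ∑ k ∈ range (n + 1), (n.choose k : R) * α ^ k * (1 - α) ^ (n - k) = 1 := by
  calc ∑ k ∈ range (n + 1), (n.choose k : R) * α ^ k * (1 - α) ^ (n - k)
      = (α + (1 - α)) ^ n := by
        rw [add_pow]
        exact sum_congr rfl fun k _ => by ring
    _ = 1 := by rw [add_sub_cancel, one_pow]

theorem succ_mul_sum_range_choose_mul_pow_mul_one_sub_pow_div_succ {𝕜 : Type*} [Field 𝕜]
    [CharZero 𝕜] (α : 𝕜) (n : ℕ) :
    ((n : 𝕜) + 1) * α *
        ∑ k ∈ range (n + 1), (n.choose k : 𝕜) * α ^ k * (1 - α) ^ (n - k) / ((k : 𝕜) + 1)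
      = 1 - (1 - α) ^ (n + 1) := by
  have hshift : ∀ k ∈ range (n + 1),
      ((n : 𝕜) + 1) * α * ((n.choose k : 𝕜) * α ^ k * (1 - α) ^ (n - k) / ((k : 𝕜) + 1))
        = ((n + 1).choose (k + 1) : 𝕜) * α ^ (k + 1) * (1 - α) ^ (n + 1 - (k + 1)) := by
    intro k _
    have hchoose : ((n : 𝕜) + 1) * n.choose k = (n + 1).choose (k + 1) * ((k : 𝕜) + 1) := by
      exact_mod_cast Nat.add_one_mul_choose_eq n k
    rw [Nat.add_sub_add_right]
    field_simp
    linear_combination (α ^ (k + 1) * (1 - α) ^ (n - k)) * hchoose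
  have htotal := sum_range_choose_mul_pow_mul_one_sub_pow α (n + 1)
  rw [sum_range_succ'] at htotal
  simp only [Nat.choose_zero_right, Nat.cast_one, pow_zero, one_mul, Nat.sub_zero] at htotal
  rw [mul_sum, sum_congr rfl hshift]
  linear_combination htotal

theorem sum_range_choose_mul_pow_mul_one_sub_pow_div_succ_le {α : ℝ} (hα : 0 < α)
    (hα1 : α ≤ 1) (n : ℕ) :
    ∑ k ∈ range (n + 1), (n.choose k : ℝ) * α ^ k * (1 - α) ^ (n - k) / ((k : ℝ) + 1)
      ≤ 1 / (((n : ℝ) + 1) * α) := by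
  rw [le_div_iff₀ (by positivity), mul_comm,
    succ_mul_sum_range_choose_mul_pow_mul_one_sub_pow_div_succ]
  have : 0 ≤ (1 - α) ^ (n + 1) := pow_nonneg (by linarith) _
  linarith

theorem sum_Icc_choose_mul_pow_mul_one_sub_pow_le {α : ℝ} (hα : 0 ≤ α) (hα1 : α ≤ 1) (n : ℕ) :
    ∑ k ∈ Icc 1 n, (n.choose k : ℝ) * α ^ k * (1 - α) ^ (n - k) ≤ 1 := by
  calc ∑ k ∈ Icc 1 n, (n.choose k : ℝ) * α ^ k * (1 - α) ^ (n - k)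
      ≤ ∑ k ∈ range (n + 1), (n.choose k : ℝ) * α ^ k * (1 - α) ^ (n - k) :=
        sum_le_sum_of_subset_of_nonneg (fun k hk => by rw [mem_Icc] at hk; rw [mem_range]; omega)
          fun k _ _ => by positivity
    _ = 1 := sum_range_choose_mul_pow_mul_one_sub_pow α n

theorem sum_Icc_choose_mul_pow_mul_one_sub_pow_div_le {α : ℝ} (hα : 0 < α) (hα1 : α ≤ 1)
    (n : ℕ) :
    ∑ k ∈ Icc 1 n, (n.choose k : ℝ) * α ^ k * (1 - α) ^ (n - k) / k
      ≤ 2 / (((n : ℝ) + 1) * α) := by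
  have hhalve : ∀ k ∈ Icc 1 n, ∀ w : ℝ, 0 ≤ w → w / k ≤ 2 * (w / ((k : ℝ) + 1)) := by
    intro k hk w hw
    have hk1 : (1 : ℝ) ≤ k := by exact_mod_cast (mem_Icc.1 hk).1
    rw [mul_div_assoc', div_le_div_iff₀ (by linarith) (by linarith)]
    nlinarith
  calc ∑ k ∈ Icc 1 n, (n.choose k : ℝ) * α ^ k * (1 - α) ^ (n - k) / k
      ≤ ∑ k ∈ Icc 1 n, 2 * ((n.choose k : ℝ) * α ^ k * (1 - α) ^ (n - k) / ((k : ℝ) + 1)) :=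
        sum_le_sum fun k hk => hhalve k hk _ (by positivity)
    _ ≤ ∑ k ∈ range (n + 1),
          2 * ((n.choose k : ℝ) * α ^ k * (1 - α) ^ (n - k) / ((k : ℝ) + 1)) :=
        sum_le_sum_of_subset_of_nonneg (fun k hk => by rw [mem_Icc] at hk; rw [mem_range]; omega)
          fun k _ _ => by positivity
    _ ≤ 2 * (1 / (((n : ℝ) + 1) * α)) := by
        rw [← mul_sum]
        gcongr
        exact sum_range_choose_mul_pow_mul_one_sub_pow_div_succ_le hα hα1 n
    _ = 2 / (((n : ℝ) + 1) * α) := mul_one_div _ _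

theorem sum_div_sqrt_le_sqrt_mul_sum_div {ι : Type*} (s : Finset ι) {p x : ι → ℝ}
    (hp : ∀ i ∈ s, 0 ≤ p i) (hx : ∀ i ∈ s, 0 ≤ x i) :
    ∑ i ∈ s, p i / √(x i) ≤ √((∑ i ∈ s, p i) * ∑ i ∈ s, p i / x i) := by
  refine Real.le_sqrt_of_sq_le (sum_sq_le_sum_mul_sum_of_sq_le_mul s hp
    (fun i hi => div_nonneg (hp i hi) (hx i hi)) fun i hi => le_of_eq ?_)
  rw [div_pow, Real.sq_sqrt (hx i hi)]
  ring

theorem binomial_truncated_inv_sqrt_sum_le (K : ℕ) (hK : 1 ≤ K) (α : ℝ)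
    (hα : 0 < α) (hα1 : α ≤ 1) :
    ∑ k ∈ Finset.Icc 1 K,
        (1 / Real.sqrt (k : ℝ)) * (K.choose k : ℝ) * α ^ k * (1 - α) ^ (K - k)
      ≤ Real.sqrt 6 / Real.sqrt (K * α) := by
  have hKα : (0 : ℝ) < K * α := mul_pos (by exact_mod_cast hK) hα
  have hmoment : (∑ k ∈ Icc 1 K, (K.choose k : ℝ) * α ^ k * (1 - α) ^ (K - k)) *
      ∑ k ∈ Icc 1 K, (K.choose k : ℝ) * α ^ k * (1 - α) ^ (K - k) / k ≤ 6 / (K * α) := by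
    calc _ ≤ 1 * (2 / (((K : ℝ) + 1) * α)) :=
          mul_le_mul (sum_Icc_choose_mul_pow_mul_one_sub_pow_le hα.le hα1 K)
            (sum_Icc_choose_mul_pow_mul_one_sub_pow_div_le hα hα1 K)
            (sum_nonneg fun k _ => by positivity) zero_le_one
      _ ≤ 6 / (K * α) := by
          rw [one_mul]
          gcongr <;> linarith
  calc ∑ k ∈ Icc 1 K, (1 / √(k : ℝ)) * (K.choose k : ℝ) * α ^ k * (1 - α) ^ (K - k)
      = ∑ k ∈ Icc 1 K, (K.choose k : ℝ) * α ^ k * (1 - α) ^ (K - k) / √(k : ℝ) :=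
        sum_congr rfl fun k _ => by ring
    _ ≤ √(6 / (K * α)) :=
        (sum_div_sqrt_le_sqrt_mul_sum_div _ (fun k _ => by positivity)
          fun k _ => k.cast_nonneg).trans (Real.sqrt_le_sqrt hmoment)
    _ = √6 / √(K * α) := Real.sqrt_div' 6 hKα.le
end

section
/- If k is a random variable following the binomial distribution B(K-1, α) with K ≥ 1 and 0 < α ≤ 1, then E[(1/(k+1))^3] ≤ 6/(K^3 · α^3). -/
/-!
Since `C(n, j) (n+1)⋯(n+m) = C(n+m, m+j) (j+1)⋯(j+m)` and `(j+1)⋯(j+m) ≤ m! (j+1)^m`,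
the weight `C(n, j) α^j (1-α)^(n-j) / (j+1)^m` is at most `m! / ((n+1)⋯(n+m) α^m)` times the
`B(n+m, α)` weight of `m + j`; these shifted weights sum to at most `1`.
-/

open Finset Nat

theorem Nat.choose_mul_succ_ascFactorial (n j m : ℕ) :
    n.choose j * (n + 1).ascFactorial m = (n + m).choose (m + j) * (j + 1).ascFactorial m := by
  induction m with
  | zero => simp
  | succ m ih =>
    have pascal := add_one_mul_choose_eq (n + m) (m + j)
    rw [ascFactorial_succ, ascFactorial_succ, mul_left_comm, ih, ← mul_assoc,
      show n + 1 + m = n + m + 1 by omega, pascal, show n + (m + 1) = n + m + 1 by omega,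
      show m + 1 + j = m + j + 1 by omega]
    ring

theorem Nat.choose_mul_succ_ascFactorial_le (n j m : ℕ) :
    n.choose j * (n + 1).ascFactorial m ≤ m ! * (n + m).choose (m + j) * (j + 1) ^ m := by
  rw [choose_mul_succ_ascFactorial, mul_comm (m !), mul_assoc]
  exact Nat.mul_le_mul_left _ (ascFactorial_le_factorial_mul_pow _ _)

theorem sum_shifted_binomial_terms_le {R : Type*} [CommSemiring R] [PartialOrder R]
    [IsOrderedRing R] {x y : R} (hx : 0 ≤ x) (hy : 0 ≤ y) (n m : ℕ) :
    ∑ j ∈ range (n + 1), x ^ (m + j) * y ^ (n - j) * (n + m).choose (m + j) ≤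
      (x + y) ^ (n + m) := by
  set f : ℕ → R := fun i => x ^ i * y ^ (n + m - i) * (n + m).choose i
  calc ∑ j ∈ range (n + 1), x ^ (m + j) * y ^ (n - j) * (n + m).choose (m + j)
      = ∑ j ∈ range (n + 1), f (m + j) := sum_congr rfl fun j _ => by
        simp only [f, show n + m - (m + j) = n - j by omega]
    _ ≤ ∑ i ∈ range m, f i + ∑ j ∈ range (n + 1), f (m + j) :=
        le_add_of_nonneg_left (sum_nonneg fun i _ => by positivity)
    _ = (x + y) ^ (n + m) := by
        rw [← sum_range_add, add_pow, show m + (n + 1) = n + m + 1 by omega]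

theorem inv_succ_pow_mul_choose_le (n j m : ℕ) :
    (1 / ((j : ℝ) + 1)) ^ m * n.choose j ≤
      m ! / (n + 1).ascFactorial m * (n + m).choose (m + j) := by
  rw [one_div_pow, one_div_mul_eq_div, div_mul_eq_mul_div,
    div_le_div_iff₀ (by positivity) (by positivity)]
  exact_mod_cast choose_mul_succ_ascFactorial_le n j m

theorem sum_inv_succ_pow_mul_binomial_le (n m : ℕ) {α : ℝ} (hα : 0 < α) (hα1 : α ≤ 1) :
    ∑ j ∈ range (n + 1), (1 / ((j : ℝ) + 1)) ^ m * n.choose j * α ^ j * (1 - α) ^ (n - j)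
      ≤ m ! / ((n + 1).ascFactorial m * α ^ m) := by
  set c : ℝ := m ! / ((n + 1).ascFactorial m * α ^ m) with hc
  have h1α : 0 ≤ 1 - α := sub_nonneg.2 hα1
  calc ∑ j ∈ range (n + 1), (1 / ((j : ℝ) + 1)) ^ m * n.choose j * α ^ j * (1 - α) ^ (n - j)
      ≤ ∑ j ∈ range (n + 1), c * (α ^ (m + j) * (1 - α) ^ (n - j) * (n + m).choose (m + j)) := by
        refine sum_le_sum fun j _ => ?_
        calc (1 / ((j : ℝ) + 1)) ^ m * n.choose j * α ^ j * (1 - α) ^ (n - j)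
            = (1 / ((j : ℝ) + 1)) ^ m * n.choose j * (α ^ j * (1 - α) ^ (n - j)) := by ring
          _ ≤ m ! / (n + 1).ascFactorial m * (n + m).choose (m + j) * (α ^ j * (1 - α) ^ (n - j)) :=
            mul_le_mul_of_nonneg_right (inv_succ_pow_mul_choose_le n j m) (by positivity)
          _ = c * (α ^ (m + j) * (1 - α) ^ (n - j) * (n + m).choose (m + j)) := by
            rw [hc]
            field_simp
            ring
    _ ≤ c * (α + (1 - α)) ^ (n + m) := by
        rw [← mul_sum]
        gcongr
        exact sum_shifted_binomial_terms_le hα.le h1α n m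
    _ = c := by simp

theorem binomial_expect_inv_succ_cube_le_general (K : ℕ) (α : ℝ)
    (hα : 0 < α) (hα1 : α ≤ 1) :
    ∑ j ∈ Finset.range K,
        (1 / ((j : ℝ) + 1)) ^ 3 * ((K - 1).choose j : ℝ) * α ^ j * (1 - α) ^ (K - 1 - j)
      ≤ 6 / ((K : ℝ) ^ 3 * α ^ 3) := by
  cases K with
  | zero => simp -- both sides vanish: the right one is `6 / 0 = 0`
  | succ n =>
    calc _ ≤ (3 ! : ℝ) / ((n + 1).ascFactorial 3 * α ^ 3) :=
          sum_inv_succ_pow_mul_binomial_le n 3 hα hα1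
      _ ≤ 6 / (((n + 1 : ℕ) : ℝ) ^ 3 * α ^ 3) := by
          gcongr
          · norm_num [factorial]
          · exact_mod_cast pow_succ_le_ascFactorial (n + 1) 3

theorem binomial_expect_inv_succ_cube_le (K : ℕ) (hK : 1 ≤ K) (α : ℝ)
    (hα : 0 < α) (hα1 : α ≤ 1) :
    ∑ j ∈ Finset.range K,
        (1 / ((j : ℝ) + 1)) ^ 3 * ((K - 1).choose j : ℝ) * α ^ j * (1 - α) ^ (K - 1 - j)
      ≤ 6 / ((K : ℝ) ^ 3 * α ^ 3) :=
  binomial_expect_inv_succ_cube_le_general K α hα hα1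
end

section
/- Let K ≥ 1, 0 < α ≤ 1, S > 0, ρ₀ > 0, σ_z > 0. If P_err(k) ≤ 1/(√k·S) + (σ_z/(k·√ρ₀))·(1/S + 1/2) for k ≥ 1 and P_err(0) = 1/2, then ∑_{k=0}^{K} P_err(k)·C(K,k)·α^k·(1-α)^{K-k} ≤ (1/2)(1-α)^K + √6/(√(α·K)·S) + (2/(α·K))·(σ_z/√ρ₀)·(1/S + 1/2). -/
/-!
Split off the `k = 0` term, which is `(1 - α)^K / 2`, and bound the remaining terms by the
conditional estimate. What is left are the binomial moments `𝔼[1/k; k ≥ 1]` and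
`𝔼[1/√k; k ≥ 1]`. The identity `α (K + 1) C(K,k) / (k + 1) = C(K+1,k+1)` turns the first into
a tail of the `Binomial(K + 1, α)` distribution, so it is at most `2 / (α K)`; Cauchy–Schwarz
bounds the second by the square root of the first.
-/

open Finset

def binomialWeight (n : ℕ) (p : ℝ) (k : ℕ) : ℝ :=
  n.choose k * p ^ k * (1 - p) ^ (n - k)

section BinomialWeight

variable {n : ℕ} {p : ℝ}

lemma binomialWeight_nonneg (hp0 : 0 ≤ p) (hp1 : p ≤ 1) (k : ℕ) : 0 ≤ binomialWeight n p k := by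
  have : 0 ≤ 1 - p := by linarith
  unfold binomialWeight
  positivity

lemma sum_binomialWeight (n : ℕ) (p : ℝ) : ∑ k ∈ range (n + 1), binomialWeight n p k = 1 := by
  have h := (add_pow p (1 - p) n).symm
  rw [add_sub_cancel, one_pow] at h
  rw [← h]
  exact sum_congr rfl fun k _ ↦ by unfold binomialWeight; ring

lemma sum_binomialWeight_succ_le (hp0 : 0 ≤ p) (hp1 : p ≤ 1) :
    ∑ k ∈ range n, binomialWeight n p (k + 1) ≤ 1 := by
  have h := sum_binomialWeight n p
  rw [sum_range_succ'] at h
  linarith [binomialWeight_nonneg (n := n) hp0 hp1 0]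

lemma mul_binomialWeight_div_succ (n : ℕ) (p : ℝ) (k : ℕ) :
    p * (n + 1) * (binomialWeight n p k / (k + 1)) = binomialWeight (n + 1) p (k + 1) := by
  have hchoose : ((n + 1 : ℕ) : ℝ) * n.choose k = (n + 1).choose (k + 1) * ((k : ℝ) + 1) := by
    exact_mod_cast Nat.add_one_mul_choose_eq n k
  unfold binomialWeight
  rw [Nat.add_sub_add_right]
  push_cast at hchoose ⊢
  field_simp
  linear_combination p * p ^ k * (1 - p) ^ (n - k) * hchoose

lemma sum_binomialWeight_div_succ_le (hp0 : 0 < p) (hp1 : p ≤ 1) :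
    ∑ k ∈ range (n + 1), binomialWeight n p k / (k + 1) ≤ 1 / (p * (n + 1)) := by
  rw [le_div_iff₀ (by positivity), sum_mul]
  calc ∑ k ∈ range (n + 1), binomialWeight n p k / (k + 1) * (p * (n + 1))
      = ∑ k ∈ range (n + 1), binomialWeight (n + 1) p (k + 1) :=
        sum_congr rfl fun k _ ↦ by rw [← mul_binomialWeight_div_succ]; ring
    _ ≤ 1 := sum_binomialWeight_succ_le hp0.le hp1

lemma sum_binomialWeight_succ_div_le (hp0 : 0 < p) (hp1 : p ≤ 1) (hn : 0 < n) :
    ∑ k ∈ range n, binomialWeight n p (k + 1) / (k + 1) ≤ 2 / (p * n) := by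
  have hw := binomialWeight_nonneg (n := n) hp0.le hp1
  have hshift : ∑ k ∈ range n, binomialWeight n p (k + 1) / ((k + 1 : ℕ) + 1)
      ≤ ∑ k ∈ range (n + 1), binomialWeight n p k / (k + 1) := by
    rw [sum_range_succ' _ n]
    exact le_add_of_nonneg_right (div_nonneg (hw 0) (by positivity))
  have hn' : (0 : ℝ) < n := by exact_mod_cast hn
  calc ∑ k ∈ range n, binomialWeight n p (k + 1) / (k + 1)
      ≤ ∑ k ∈ range n, 2 * (binomialWeight n p (k + 1) / ((k + 1 : ℕ) + 1)) := by
        gcongr with k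
        rw [mul_div_assoc', div_le_div_iff₀ (by positivity) (by positivity)]
        push_cast
        nlinarith [hw (k + 1)]
    _ ≤ 2 * (1 / (p * (n + 1))) := by
        rw [← mul_sum]
        gcongr
        exact hshift.trans (sum_binomialWeight_div_succ_le hp0 hp1)
    _ ≤ 2 / (p * n) := by
        rw [mul_one_div]
        gcongr
        linarith

lemma sum_binomialWeight_succ_div_sqrt_le (hp0 : 0 < p) (hp1 : p ≤ 1) (hn : 0 < n) :
    ∑ k ∈ range n, binomialWeight n p (k + 1) / √((k : ℝ) + 1) ≤ √2 / √(p * n) := by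
  have hw := binomialWeight_nonneg (n := n) hp0.le hp1
  have hcs := Real.sum_sqrt_mul_sqrt_le (range n)
    (f := fun k ↦ binomialWeight n p (k + 1) / ((k : ℝ) + 1))
    (g := fun k ↦ binomialWeight n p (k + 1))
    (fun k ↦ div_nonneg (hw _) (by positivity)) (fun k ↦ hw _)
  calc ∑ k ∈ range n, binomialWeight n p (k + 1) / √((k : ℝ) + 1)
      = ∑ k ∈ range n, √(binomialWeight n p (k + 1) / ((k : ℝ) + 1))
          * √(binomialWeight n p (k + 1)) := by
        refine sum_congr rfl fun k _ ↦ ?_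
        rw [Real.sqrt_div' _ (by positivity), div_mul_eq_mul_div, Real.mul_self_sqrt (hw _)]
    _ ≤ √(2 / (p * n)) * √1 := by
        refine hcs.trans ?_
        gcongr
        · exact sum_binomialWeight_succ_div_le hp0 hp1 hn
        · exact sum_binomialWeight_succ_le hp0.le hp1
    _ = √2 / √(p * n) := by rw [Real.sqrt_one, mul_one, Real.sqrt_div' _ (by positivity)]

end BinomialWeight

theorem fading_unconditional_error_prob_general (K : ℕ) (hK : 1 ≤ K) (α S ρ₀ σ_z : ℝ)
    (hα : 0 < α) (hα1 : α ≤ 1) (hS : 0 < S) (hσ : 0 < σ_z)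
    (Perr : ℕ → ℝ)
    (hcond : ∀ k : ℕ, 1 ≤ k →
      Perr k ≤ 1 / (Real.sqrt k * S) + (σ_z / (k * Real.sqrt ρ₀)) * (1 / S + 1 / 2))
    (h0 : Perr 0 = 1 / 2) :
    ∑ k ∈ Finset.range (K + 1), Perr k * (K.choose k : ℝ) * α ^ k * (1 - α) ^ (K - k)
      ≤ (1 / 2) * (1 - α) ^ K + Real.sqrt 6 / (Real.sqrt (α * K) * S)
        + (2 / (α * K)) * (σ_z / Real.sqrt ρ₀) * (1 / S + 1 / 2) := by
  set c := σ_z / √ρ₀ * (1 / S + 1 / 2) with hc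
  have hterm (k : ℕ) : Perr (k + 1) * binomialWeight K α (k + 1)
      ≤ 1 / S * (binomialWeight K α (k + 1) / √((k : ℝ) + 1))
        + c * (binomialWeight K α (k + 1) / ((k : ℝ) + 1)) := by
    have h := mul_le_mul_of_nonneg_right (hcond (k + 1) (Nat.le_add_left 1 k))
      (binomialWeight_nonneg (n := K) hα.le hα1 (k + 1))
    push_cast at h
    exact h.trans_eq (by rw [hc, div_mul_eq_div_div σ_z]; ring)
  calc ∑ k ∈ range (K + 1), Perr k * (K.choose k : ℝ) * α ^ k * (1 - α) ^ (K - k)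
      = 1 / 2 * (1 - α) ^ K + ∑ k ∈ range K, Perr (k + 1) * binomialWeight K α (k + 1) := by
        rw [sum_range_succ', add_comm]
        simp [binomialWeight, h0, mul_assoc]
    _ ≤ 1 / 2 * (1 - α) ^ K + (1 / S * (√2 / √(α * K)) + c * (2 / (α * K))) := by
        grw [sum_le_sum fun k _ ↦ hterm k, sum_add_distrib, ← mul_sum, ← mul_sum,
          sum_binomialWeight_succ_div_sqrt_le hα hα1 hK,
          sum_binomialWeight_succ_div_le hα hα1 hK]
    _ ≤ _ := by
        have h26 : √2 ≤ √6 := Real.sqrt_le_sqrt (by norm_num)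
        have : 1 / S * (√2 / √(α * K)) ≤ √6 / (√(α * K) * S) := by
          rw [one_div_mul_eq_div, div_div]
          gcongr
        rw [hc]
        linarith

theorem fading_unconditional_error_prob (K : ℕ) (hK : 1 ≤ K) (α S ρ₀ σ_z : ℝ)
    (hα : 0 < α) (hα1 : α ≤ 1) (hS : 0 < S) (hρ : 0 < ρ₀) (hσ : 0 < σ_z)
    (Perr : ℕ → ℝ)
    (hcond : ∀ k : ℕ, 1 ≤ k →
      Perr k ≤ 1 / (Real.sqrt k * S) + (σ_z / (k * Real.sqrt ρ₀)) * (1 / S + 1 / 2))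
    (h0 : Perr 0 = 1 / 2) :
    ∑ k ∈ Finset.range (K + 1), Perr k * (K.choose k : ℝ) * α ^ k * (1 - α) ^ (K - k)
      ≤ (1 / 2) * (1 - α) ^ K + Real.sqrt 6 / (Real.sqrt (α * K) * S)
        + (2 / (α * K)) * (σ_z / Real.sqrt ρ₀) * (1 / S + 1 / 2) :=
  fading_unconditional_error_prob_general K hK α S ρ₀ σ_z hα hα1 hS hσ Perr hcond h0
end

section
/- Let F: ℝ^q → ℝ satisfy the coordinate-wise smoothness condition |F(w') - F(w) - g(w)ᵀ(w'-w)| ≤ (1/2)∑_i L_i(w'_i - w_i)² with g = ∇F. If w' = w - η·sign(ĝ) for some vector ĝ ∈ ℝ^q with nonzero entries and η > 0, then F(w') - F(w) ≤ -η‖g(w)‖₁ + (η²/2)‖L‖₁ + 2η·∑_{i=1}^q |g_i(w)|·𝟙[sign(ĝ_i) ≠ sign(g_i(w))]. -/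
theorem signSGD_descent_step (q : ℕ) (F : (Fin q → ℝ) → ℝ)
    (g : (Fin q → ℝ) → Fin q → ℝ) (L : Fin q → ℝ) (η : ℝ) (hη : 0 < η)
    (hsmooth : ∀ w w' : Fin q → ℝ,
      |F w' - F w - ∑ i, g w i * (w' i - w i)| ≤ (1 / 2) * ∑ i, L i * (w' i - w i) ^ 2)
    (w : Fin q → ℝ) (ghat : Fin q → ℝ) (hghat : ∀ i, ghat i ≠ 0)
    (w' : Fin q → ℝ) (hw' : w' = fun i => w i - η * Real.sign (ghat i)) :
    F w' - F w ≤ -η * (∑ i, |g w i|) + (η ^ 2 / 2) * (∑ i, L i)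
      + 2 * η * ∑ i, |g w i| * (if Real.sign (ghat i) ≠ Real.sign (g w i) then 1 else 0) := by
  have h := hsmooth w w'
  have key : F w' - F w ≤ (∑ i, g w i * (w' i - w i)) + (1/2) * ∑ i, L i * (w' i - w i) ^ 2 := by
    have := abs_le.mp h
    linarith [this.2]
  have hΔ : ∀ i, w' i - w i = -(η * Real.sign (ghat i)) := by
    intro i; rw [hw']; ring
  have hsq : ∀ i, Real.sign (ghat i) ^ 2 = 1 := by
    intro i
    rcases lt_trichotomy (ghat i) 0 with h'|h'|h'
    · rw [Real.sign_of_neg h']; norm_num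
    · exact absurd h' (hghat i)
    · rw [Real.sign_of_pos h']; norm_num
  have hs_abs : ∀ i, |Real.sign (ghat i)| = 1 := by
    intro i
    have := hsq i
    nlinarith [abs_nonneg (Real.sign (ghat i)), sq_abs (Real.sign (ghat i))]
  have hL : (1/2 : ℝ) * ∑ i, L i * (w' i - w i) ^ 2 = (η ^ 2 / 2) * ∑ i, L i := by
    rw [Finset.mul_sum, Finset.mul_sum]
    apply Finset.sum_congr rfl
    intro i _
    rw [hΔ i]
    have h2 : (-(η * Real.sign (ghat i))) ^ 2 = η ^ 2 := by
      rw [neg_sq, mul_pow, hsq i, mul_one]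
    rw [h2]; ring
  have hcoord : ∀ i ∈ Finset.univ, g w i * (w' i - w i) ≤
      -η * |g w i| + 2 * η * (|g w i| * (if Real.sign (ghat i) ≠ Real.sign (g w i) then 1 else 0)) := by
    intro i _
    rw [hΔ i]
    by_cases hc : Real.sign (ghat i) ≠ Real.sign (g w i)
    · rw [if_pos hc, mul_one]
      have h1 : g w i * Real.sign (ghat i) ≤ |g w i| := by
        calc g w i * Real.sign (ghat i) ≤ |g w i * Real.sign (ghat i)| := le_abs_self _
        _ = |g w i| * |Real.sign (ghat i)| := abs_mul _ _
        _ = |g w i| := by rw [hs_abs i, mul_one]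
      have h2 : -(g w i * Real.sign (ghat i)) ≤ |g w i| := by
        calc -(g w i * Real.sign (ghat i)) ≤ |g w i * Real.sign (ghat i)| := neg_le_abs _
        _ = |g w i| * |Real.sign (ghat i)| := abs_mul _ _
        _ = |g w i| := by rw [hs_abs i, mul_one]
      nlinarith
    · push_neg at hc
      rw [if_neg (by simp [hc]), mul_zero, mul_zero, add_zero]
      have hg : Real.sign (ghat i) * g w i = |g w i| := by
        rw [hc]
        rcases lt_trichotomy (g w i) 0 with h'|h'|h'
        · rw [Real.sign_of_neg h', abs_of_neg h']; ring
        · simp [h']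
        · rw [Real.sign_of_pos h', abs_of_pos h', one_mul]
      have heq : g w i * (-(η * Real.sign (ghat i))) = -η * |g w i| := by
        rw [← hg]; ring
      exact le_of_eq heq
  have hsum := Finset.sum_le_sum hcoord
  rw [Finset.sum_add_distrib, ← Finset.mul_sum, ← Finset.mul_sum] at hsum
  linarith [key, hL, hsum]
end
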